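/- arXiv:2410.01394 — 7 statements merged into one kernel-verified Lean document; each statement's English description precedes it below -/
import Mathlib

section
/- For every real N > 0 there exist nonnegative reals (λ_k)_{k∈ℕ} with Σ_k λ_k < ∞ and functions (ψ_k)_{k∈ℕ} from [0,N] to ℝ that are linearly independent and uniformly bounded in sup norm (there exists M < ∞ with |ψ_k(x)| ≤ M for all k and all x ∈ [0,N]), such that for all x, t ∈ [0,N] the series Σ_k λ_k ψ_k(x) ψ_k(t) converges to exp(−(x−t)²). In other words, on any bounded domain the Gaussian kernel admits a (1,∞)-expansion. -/
/-!
Writing `exp (-(x - t)^2) = exp (-x^2) * exp (2 x t) * exp (-t^2)` and expanding the middle factor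
as `∑ (2 x t)^k / k!` gives the expansion with weights `(2 N^2)^k / k!`, which are summable, and
features `(x / N)^k * exp (-x^2)`, which are bounded by `1` on `[0, N]`. The features are linearly
independent because a polynomial in `x / N` vanishing on the infinite set `[0, N]` is zero.
-/

open Polynomial Real

theorem linearIndependent_pow_mul_of_infinite_range {K α : Type*} [Field K] (f : α → K)
    (hf : (Set.range f).Infinite) (g : α → K) (hg : ∀ a, g a ≠ 0) :
    LinearIndependent K (fun (k : ℕ) (a : α) => f a ^ k * g a) := by
  let L : K[X] →ₗ[K] (α → K) := LinearMap.pi fun a => g a • leval (f a)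
  have hL : LinearMap.ker L = ⊥ := by
    refine LinearMap.ker_eq_bot'.2 fun p hp => p.eq_zero_of_infinite_isRoot (hf.mono ?_)
    rintro _ ⟨a, rfl⟩
    simpa [L, hg a] using congrFun hp a
  have hX : LinearIndependent K (fun k : ℕ => (X : K[X]) ^ k) := by
    simpa [X_pow_eq_monomial] using (basisMonomials K).linearIndependent
  have hLX : (fun (k : ℕ) (a : α) => f a ^ k * g a) = L ∘ fun k => X ^ k := by
    ext k a
    simp [L, mul_comm]
  exact hLX ▸ hX.map' L hL

noncomputable def gaussianWeight (N : ℝ) (k : ℕ) : ℝ := (2 * N ^ 2) ^ k / k.factorial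

noncomputable def gaussianFeature (N : ℝ) (k : ℕ) (x : ℝ) : ℝ := (x / N) ^ k * exp (-x ^ 2)

theorem gaussianWeight_nonneg (N : ℝ) (k : ℕ) : 0 ≤ gaussianWeight N k := by
  unfold gaussianWeight
  positivity

theorem summable_gaussianWeight (N : ℝ) : Summable (gaussianWeight N) :=
  summable_pow_div_factorial _

theorem abs_gaussianFeature_le_one {N x : ℝ} (hx : 0 ≤ x) (hxN : x ≤ N) (k : ℕ) :
    |gaussianFeature N k x| ≤ 1 := by
  have hratio : 0 ≤ x / N := div_nonneg hx (hx.trans hxN)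
  have hpow : |(x / N) ^ k| ≤ 1 := by
    rw [abs_of_nonneg (pow_nonneg hratio k)]
    exact pow_le_one₀ hratio (div_le_one_of_le₀ hxN (hx.trans hxN))
  have hexp : |exp (-x ^ 2)| ≤ 1 := by
    rw [abs_of_pos (exp_pos _), exp_le_one_iff, neg_nonpos]
    positivity
  rw [gaussianFeature, abs_mul]
  exact mul_le_one₀ hpow (abs_nonneg _) hexp

theorem hasSum_gaussianWeight_mul_gaussianFeature {N : ℝ} (hN : N ≠ 0) (x t : ℝ) :
    HasSum (fun k => gaussianWeight N k * gaussianFeature N k x * gaussianFeature N k t)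
      (exp (-(x - t) ^ 2)) := by
  have hsplit : exp (-(x - t) ^ 2) = exp (2 * x * t) * (exp (-x ^ 2) * exp (-t ^ 2)) := by
    rw [← exp_add, ← exp_add]
    ring_nf
  have hterm (k : ℕ) : gaussianWeight N k * gaussianFeature N k x * gaussianFeature N k t =
      (2 * x * t) ^ k / k.factorial * (exp (-x ^ 2) * exp (-t ^ 2)) := by
    simp only [gaussianWeight, gaussianFeature, div_pow, mul_pow]
    field_simp
    ring
  have hseries : HasSum (fun k => (2 * x * t) ^ k / k.factorial) (exp (2 * x * t)) := by
    rw [exp_eq_exp_ℝ]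
    exact NormedSpace.expSeries_div_hasSum_exp _
  rw [hsplit, funext hterm]
  exact hseries.mul_right _

/-- On any bounded domain `[0, N]`, the Gaussian kernel `exp (-(x-t)^2)` admits a
`(1, ∞)`-expansion: nonnegative summable weights `lam` and linearly independent
basis functions `ψ` uniformly bounded in sup norm. -/
theorem gaussian_one_infty_expansion_bounded_domain (N : ℝ) (hN : 0 < N) :
    ∃ (lam : ℕ → ℝ) (ψ : ℕ → Set.Icc (0 : ℝ) N → ℝ),
      (∀ k, 0 ≤ lam k) ∧
      Summable lam ∧
      LinearIndependent ℝ ψ ∧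
      (∃ M : ℝ, ∀ (k : ℕ) (x : Set.Icc (0 : ℝ) N), |ψ k x| ≤ M) ∧
      ∀ x t : Set.Icc (0 : ℝ) N,
        HasSum (fun k : ℕ => lam k * ψ k x * ψ k t)
          (Real.exp (-((x : ℝ) - (t : ℝ)) ^ 2)) := by
  have : Infinite (Set.Icc (0 : ℝ) N) := Set.Icc.infinite hN
  have hrange : (Set.range fun x : Set.Icc (0 : ℝ) N => (x : ℝ) / N).Infinite :=
    Set.infinite_range_of_injective fun x y hxy =>
      Subtype.ext ((div_left_inj' hN.ne').1 hxy)
  exact ⟨gaussianWeight N, fun k x => gaussianFeature N k x, gaussianWeight_nonneg N,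
    summable_gaussianWeight N,
    linearIndependent_pow_mul_of_infinite_range _ hrange _ fun x => exp_ne_zero _,
    ⟨1, fun k x => abs_gaussianFeature_le_one x.2.1 x.2.2 k⟩,
    fun x t => hasSum_gaussianWeight_mul_gaussianFeature hN.ne' x t⟩
end

section
/- Let F : [0,∞) → ℝ satisfy F(0) = 1 and F(r) → 0 as r → ∞, and suppose the kernel K : ℝ × ℝ → ℝ defined by K(x,y) = F(|x−y|) is positive semidefinite. Then there do not exist nonnegative reals (λ_k)_{k∈ℕ} with Σ_k λ_k < ∞, a constant M < ∞, and functions ψ_k : ℝ → ℝ with |ψ_k(x)| ≤ M for all k and all x ∈ ℝ, such that K(x,y) = Σ_k λ_k ψ_k(x) ψ_k(y) pointwise for all x, y ∈ ℝ. That is, no such radial basis function kernel admits a (1,∞)-expansion on ℝ. -/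
open Filter Finset

private lemma nat_cast_abs_sub_ge_one {i j : ℕ} (hij : i ≠ j) : (1:ℝ) ≤ |(i:ℝ) - (j:ℝ)| := by
  have h1 : (1:ℤ) ≤ |(i:ℤ) - (j:ℤ)| :=
    Int.one_le_abs (sub_ne_zero.mpr (by exact_mod_cast hij))
  exact_mod_cast h1

/-- A radial basis function kernel `K(x,y) = F(|x-y|)` on `ℝ` with `F 0 = 1` and
`F(r) → 0` as `r → ∞`, assumed positive semidefinite, admits no `(1,∞)`-expansion:
there are no nonnegative summable weights and uniformly bounded basis functions
giving a pointwise expansion of `K`. -/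
theorem rbf_no_one_infty_expansion (F : ℝ → ℝ) (hF0 : F 0 = 1)
    (hFlim : Tendsto F atTop (nhds 0))
    (K : ℝ → ℝ → ℝ) (hK : ∀ x y, K x y = F |x - y|)
    (hPSD : ∀ (n : ℕ) (x a : Fin n → ℝ),
      0 ≤ ∑ i, ∑ j, a i * a j * K (x i) (x j)) :
    ¬ ∃ (lam : ℕ → ℝ) (M : ℝ) (ψ : ℕ → ℝ → ℝ),
        (∀ k, 0 ≤ lam k) ∧
        Summable lam ∧
        (∀ (k : ℕ) (x : ℝ), |ψ k x| ≤ M) ∧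
        ∀ x y : ℝ, HasSum (fun k : ℕ => lam k * ψ k x * ψ k y) (K x y) := by
  rintro ⟨lam, M, ψ, hlam, hsum, hbd, hexp⟩
  have hM0 : 0 ≤ M := le_trans (abs_nonneg _) (hbd 0 0)
  have hdiag : ∀ x : ℝ, K x x = 1 := by
    intro x; rw [hK]; simp [hF0]
  -- choose N so that the tail of lam is small
  have hεpos : (0:ℝ) < 1 / (2 * (M ^ 2 + 1)) := by positivity
  have htail : Tendsto (fun i => ∑' k, lam (k + i)) atTop (nhds 0) :=
    tendsto_sum_nat_add lam
  obtain ⟨N, hN⟩ : ∃ N, ∑' k, lam (k + N) < 1 / (2 * (M ^ 2 + 1)) := by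
    have h := (htail.eventually (eventually_lt_nhds hεpos)).exists
    simpa using h
  have hTnn : 0 ≤ ∑' k, lam (k + N) := tsum_nonneg fun k => hlam _
  -- the head of the diagonal expansion is at least 1/2
  have hhead : ∀ x0 : ℝ, (1:ℝ)/2 ≤ ∑ k ∈ range N, lam k * ψ k x0 * ψ k x0 := by
    intro x0
    have hg : HasSum (fun k => lam k * ψ k x0 * ψ k x0) 1 := by
      have := hexp x0 x0
      rwa [hdiag x0] at this
    have hgs : Summable (fun k => lam k * ψ k x0 * ψ k x0) := hg.summable
    have hsplit : ∑ k ∈ range N, lam k * ψ k x0 * ψ k x0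
        + ∑' k, lam (k + N) * ψ (k + N) x0 * ψ (k + N) x0 = 1 := by
      rw [Summable.sum_add_tsum_nat_add N hgs, hg.tsum_eq]
    have htb : ∑' k, lam (k + N) * ψ (k + N) x0 * ψ (k + N) x0
        ≤ ∑' k, lam (k + N) * M ^ 2 := by
      refine Summable.tsum_le_tsum (fun k => ?_) ((summable_nat_add_iff N).mpr hgs)
        (((summable_nat_add_iff N).mpr hsum).mul_right _)
      have h := abs_le.mp (hbd (k + N) x0)
      have hψ : ψ (k + N) x0 * ψ (k + N) x0 ≤ M ^ 2 := by nlinarith [h.1, h.2]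
      have := mul_le_mul_of_nonneg_left hψ (hlam (k + N))
      linarith [this, mul_assoc (lam (k + N)) (ψ (k + N) x0) (ψ (k + N) x0)]
    have htm : ∑' k, lam (k + N) * M ^ 2 = (∑' k, lam (k + N)) * M ^ 2 :=
      tsum_mul_right
    have h4 : (∑' k, lam (k + N)) * (M ^ 2 + 1)
        ≤ (1 / (2 * (M ^ 2 + 1))) * (M ^ 2 + 1) :=
      mul_le_mul_of_nonneg_right hN.le (by positivity)
    have h5 : (1 / (2 * (M ^ 2 + 1))) * (M ^ 2 + 1) = 1 / 2 := by
      field_simp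
    have h6 : (∑' k, lam (k + N)) * (M ^ 2 + 1)
        = (∑' k, lam (k + N)) * M ^ 2 + (∑' k, lam (k + N)) := by ring
    linarith
  -- choose well-separated points
  set δ : ℝ := 1 / (4 * ((N:ℝ) + 1)) with hδdef
  have hδpos : 0 < δ := by positivity
  obtain ⟨R, hR⟩ := (Metric.tendsto_atTop.mp hFlim) δ hδpos
  set R' : ℝ := max R 1 with hR'def
  have hR'pos : (0:ℝ) < R' := lt_of_lt_of_le one_pos (le_max_right _ _)
  set x : ℕ → ℝ := fun i => (i:ℝ) * R' with hxdef
  have Koff : ∀ i j : ℕ, i ≠ j → |K (x i) (x j)| ≤ δ := by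
    intro i j hij
    have habs : |x i - x j| = |(i:ℝ) - (j:ℝ)| * R' := by
      rw [hxdef]; simp only [← sub_mul, abs_mul, abs_of_pos hR'pos]
    have h1 : R ≤ |x i - x j| := by
      rw [habs]
      calc R ≤ R' := le_max_left _ _
        _ = 1 * R' := (one_mul _).symm
        _ ≤ |(i:ℝ) - (j:ℝ)| * R' :=
          mul_le_mul_of_nonneg_right (nat_cast_abs_sub_ge_one hij) hR'pos.le
    have := hR _ h1
    rw [Real.dist_eq, sub_zero] at this
    rw [hK]
    exact this.le
  set n : ℕ := 8 * (N + 1) with hndef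
  -- the per-k bound : lam k * s k ≤ 1 + δ * n
  have hkey : ∀ k : ℕ,
      lam k * (∑ i ∈ range n, ψ k (x i) * ψ k (x i)) ≤ 1 + δ * (n:ℝ) := by
    intro k
    set s : ℝ := ∑ i ∈ range n, ψ k (x i) * ψ k (x i) with hsdef
    have hsnn : 0 ≤ s := sum_nonneg fun i _ => mul_self_nonneg _
    set Q : ℝ := ∑ i ∈ range n, ∑ j ∈ range n,
      ψ k (x i) * ψ k (x j) * K (x i) (x j) with hQdef
    -- Q as a sum over the expansion index
    have hQ0 : HasSum (fun m => ∑ i ∈ range n, ∑ j ∈ range n,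
        (ψ k (x i) * ψ k (x j)) * (lam m * ψ m (x i) * ψ m (x j))) Q := by
      refine hasSum_sum fun i _ => hasSum_sum fun j _ => ?_
      exact (hexp (x i) (x j)).mul_left _
    have heq : (fun m => ∑ i ∈ range n, ∑ j ∈ range n,
        (ψ k (x i) * ψ k (x j)) * (lam m * ψ m (x i) * ψ m (x j)))
        = fun m => lam m * (∑ i ∈ range n, ψ k (x i) * ψ m (x i)) ^ 2 := by
      funext m
      rw [sq, Finset.sum_mul_sum, Finset.mul_sum]
      refine sum_congr rfl fun i _ => ?_
      rw [Finset.mul_sum]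
      exact sum_congr rfl fun j _ => by ring
    rw [heq] at hQ0
    -- lower bound : lam k * s ^ 2 ≤ Q
    have hA : lam k * s ^ 2 ≤ Q :=
      le_hasSum hQ0 k fun m _ => mul_nonneg (hlam m) (sq_nonneg _)
    -- upper bound : Q ≤ s + δ * (n * s)
    have hB : Q ≤ s + δ * ((n:ℝ) * s) := by
      have hstep : Q ≤ ∑ i ∈ range n, ∑ j ∈ range n,
          ((if i = j then ψ k (x i) * ψ k (x i) else 0)
            + δ * (|ψ k (x i)| * |ψ k (x j)|)) := by
        refine sum_le_sum fun i _ => sum_le_sum fun j _ => ?_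
        by_cases h : i = j
        · subst h
          rw [if_pos rfl, hdiag]
          have : 0 ≤ δ * (|ψ k (x i)| * |ψ k (x i)|) := by positivity
          linarith
        · rw [if_neg h, zero_add]
          have h1 := Koff i j h
          calc ψ k (x i) * ψ k (x j) * K (x i) (x j)
              ≤ |ψ k (x i) * ψ k (x j) * K (x i) (x j)| := le_abs_self _
            _ = |ψ k (x i)| * |ψ k (x j)| * |K (x i) (x j)| := by
                rw [abs_mul, abs_mul]
            _ ≤ |ψ k (x i)| * |ψ k (x j)| * δ :=
                mul_le_mul_of_nonneg_left h1 (by positivity)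
            _ = δ * (|ψ k (x i)| * |ψ k (x j)|) := by ring
      have hif : ∑ i ∈ range n, ∑ j ∈ range n,
          (if i = j then ψ k (x i) * ψ k (x i) else 0) = s := by
        rw [hsdef]
        refine sum_congr rfl fun i hi => ?_
        rw [Finset.sum_ite_eq (range n) i fun _ => ψ k (x i) * ψ k (x i), if_pos hi]
      have hd : ∑ i ∈ range n, ∑ j ∈ range n, δ * (|ψ k (x i)| * |ψ k (x j)|)
          = δ * (∑ i ∈ range n, |ψ k (x i)|) ^ 2 := by
        rw [sq, Finset.sum_mul_sum, Finset.mul_sum]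
        refine sum_congr rfl fun i _ => ?_
        rw [Finset.mul_sum]
      have hcs : (∑ i ∈ range n, |ψ k (x i)|) ^ 2 ≤ (n:ℝ) * s := by
        have h := sq_sum_le_card_mul_sum_sq (s := range n)
          (f := fun i => |ψ k (x i)|)
        simpa [card_range, sq_abs, pow_two, hsdef] using h
      calc Q ≤ ∑ i ∈ range n, ∑ j ∈ range n,
            ((if i = j then ψ k (x i) * ψ k (x i) else 0)
              + δ * (|ψ k (x i)| * |ψ k (x j)|)) := hstep
        _ = s + δ * (∑ i ∈ range n, |ψ k (x i)|) ^ 2 := by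
            simp only [Finset.sum_add_distrib]
            rw [hif, hd]
        _ ≤ s + δ * ((n:ℝ) * s) := by
            have := mul_le_mul_of_nonneg_left hcs hδpos.le
            linarith
    -- combine
    by_cases hs : s = 0
    · rw [hs, mul_zero]; positivity
    · have hspos : 0 < s := lt_of_le_of_ne hsnn (Ne.symm hs)
      have h2 : (lam k * s) * s ≤ (1 + δ * (n:ℝ)) * s := by
        have : lam k * s ^ 2 ≤ s + δ * ((n:ℝ) * s) := le_trans hA hB
        nlinarith
      exact le_of_mul_le_mul_right h2 hspos
  -- assemble the contradiction
  have hup : ∑ k ∈ range N, lam k * (∑ i ∈ range n, ψ k (x i) * ψ k (x i))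
      ≤ (N:ℝ) * (1 + δ * (n:ℝ)) := by
    calc ∑ k ∈ range N, lam k * (∑ i ∈ range n, ψ k (x i) * ψ k (x i))
        ≤ ∑ _k ∈ range N, (1 + δ * (n:ℝ)) := sum_le_sum fun k _ => hkey k
      _ = (N:ℝ) * (1 + δ * (n:ℝ)) := by rw [sum_const, card_range, nsmul_eq_mul]
  have hlow : (n:ℝ) * (1/2)
      ≤ ∑ k ∈ range N, lam k * (∑ i ∈ range n, ψ k (x i) * ψ k (x i)) := by
    calc (n:ℝ) * (1/2) = ∑ _i ∈ range n, (1/2 : ℝ) := by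
          rw [sum_const, card_range, nsmul_eq_mul]
      _ ≤ ∑ i ∈ range n, ∑ k ∈ range N, lam k * ψ k (x i) * ψ k (x i) :=
          sum_le_sum fun i _ => hhead (x i)
      _ = ∑ k ∈ range N, lam k * (∑ i ∈ range n, ψ k (x i) * ψ k (x i)) := by
          rw [Finset.sum_comm]
          refine sum_congr rfl fun k _ => ?_
          rw [Finset.mul_sum]
          exact sum_congr rfl fun i _ => by ring
  have hfin : (n:ℝ) * (1/2) ≤ (N:ℝ) * (1 + δ * (n:ℝ)) := le_trans hlow hup
  have hcast : (n:ℝ) = 8 * ((N:ℝ) + 1) := by rw [hndef]; push_cast; ring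
  have hδn : δ * (n:ℝ) = 2 := by
    rw [hδdef, hcast]
    have : ((N:ℝ) + 1) ≠ 0 := by positivity
    field_simp
    ring
  rw [hδn, hcast] at hfin
  have hNnn : (0:ℝ) ≤ (N:ℝ) := Nat.cast_nonneg N
  linarith
end

section
/- There do not exist nonnegative reals (λ_k)_{k∈ℕ} with Σ_k λ_k < ∞, a constant M < ∞, and functions ψ_k : ℝ → ℝ with |ψ_k(x)| ≤ M for all k and all x ∈ ℝ, such that exp(−(x−y)²) = Σ_k λ_k ψ_k(x) ψ_k(y) for all x, y ∈ ℝ. That is, the Gaussian kernel on ℝ does not admit a (1,∞)-expansion, so the exponent p = 1 cannot be reached. -/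
open Filter Finset

/-- Tail bound helper: the tail of the expansion is bounded by `M^2` times the tail
of the weights. -/
lemma gaussian_tail_bound (lam : ℕ → ℝ) (hlam : ∀ k, 0 ≤ lam k)
    (hsum : Summable lam) (M : ℝ) (a b : ℕ → ℝ)
    (ha : ∀ k, |a k| ≤ M) (hb : ∀ k, |b k| ≤ M) (N : ℕ) :
    |∑' k : ℕ, lam (k + N) * a (k + N) * b (k + N)| ≤ M ^ 2 * ∑' k : ℕ, lam (k + N) := by
  have hsum' : Summable fun k => lam (k + N) := (summable_nat_add_iff N).2 hsum
  have hg : Summable fun k => M ^ 2 * lam (k + N) := hsum'.mul_left _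
  have hpt : ∀ k : ℕ, |lam (k + N) * a (k + N) * b (k + N)| ≤ M ^ 2 * lam (k + N) := by
    intro k
    have h1 : |lam (k + N) * a (k + N) * b (k + N)|
        = lam (k + N) * |a (k + N)| * |b (k + N)| := by
      rw [abs_mul, abs_mul, abs_of_nonneg (hlam _)]
    rw [h1]
    have hM : 0 ≤ M := le_trans (abs_nonneg _) (ha 0)
    calc lam (k + N) * |a (k + N)| * |b (k + N)|
        ≤ lam (k + N) * M * M := by
          apply mul_le_mul (mul_le_mul_of_nonneg_left (ha _) (hlam _)) (hb _) (abs_nonneg _)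
          exact mul_nonneg (hlam _) hM
      _ = M ^ 2 * lam (k + N) := by ring
  have hfs : Summable fun k => |lam (k + N) * a (k + N) * b (k + N)| :=
    Summable.of_nonneg_of_le (fun k => abs_nonneg _) hpt hg
  have habs : ‖∑' k : ℕ, lam (k + N) * a (k + N) * b (k + N)‖
      ≤ ∑' k : ℕ, ‖lam (k + N) * a (k + N) * b (k + N)‖ :=
    norm_tsum_le_tsum_norm (by simpa only [Real.norm_eq_abs] using hfs)
  simp only [Real.norm_eq_abs] at habs
  calc |∑' k : ℕ, lam (k + N) * a (k + N) * b (k + N)|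
      ≤ ∑' k : ℕ, |lam (k + N) * a (k + N) * b (k + N)| := habs
    _ ≤ ∑' k : ℕ, M ^ 2 * lam (k + N) := Summable.tsum_le_tsum hpt hfs hg
    _ = M ^ 2 * ∑' k : ℕ, lam (k + N) := tsum_mul_left

/-- The Gaussian kernel on `ℝ` does not admit a `(1,∞)`-expansion: there are no
nonnegative summable weights `lam` and uniformly bounded functions `ψ` with
`exp (-(x-y)^2) = ∑ k, lam k * ψ k x * ψ k y` pointwise. -/
theorem gaussian_no_one_infty_expansion :
    ¬ ∃ (lam : ℕ → ℝ) (M : ℝ) (ψ : ℕ → ℝ → ℝ),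
        (∀ k, 0 ≤ lam k) ∧
        Summable lam ∧
        (∀ (k : ℕ) (x : ℝ), |ψ k x| ≤ M) ∧
        ∀ x y : ℝ, HasSum (fun k : ℕ => lam k * ψ k x * ψ k y)
          (Real.exp (-(x - y) ^ 2)) := by
  rintro ⟨lam, M, ψ, hlam, hsum, hψ, hK⟩
  -- diagonal sums to 1
  have hdiag : ∀ x : ℝ, HasSum (fun k : ℕ => lam k * ψ k x * ψ k x) 1 := by
    intro x
    simpa using hK x x
  -- M is positive
  have hM : 0 < M := by
    by_contra h
    push_neg at h
    have h0 : ∀ k : ℕ, ψ k 0 = 0 := fun k =>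
      abs_nonpos_iff.mp ((hψ k 0).trans h)
    have := hdiag 0
    simp only [h0, mul_zero] at this
    exact one_ne_zero (this.unique hasSum_zero)
  set S : ℝ := ∑' k, lam k with hS
  have hS0 : 0 ≤ S := tsum_nonneg hlam
  set δ : ℝ := 1 / (8 * M * (S + 1)) with hδ
  have hδ0 : 0 < δ := by positivity
  -- choose N so the tail of lam is small
  have htail : Tendsto (fun N : ℕ => ∑' k, lam (k + N)) atTop (nhds 0) :=
    tendsto_sum_nat_add lam
  obtain ⟨N, hN⟩ : ∃ N : ℕ, ∑' k, lam (k + N) < 1 / (8 * M ^ 2) := by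
    have := (htail.eventually (eventually_lt_nhds (by positivity : (0:ℝ) < 1 / (8 * M ^ 2)))).exists
    simpa using this
  have htailN : M ^ 2 * ∑' k, lam (k + N) ≤ 1 / 8 := by
    have h1 : M ^ 2 * ∑' k, lam (k + N) ≤ M ^ 2 * (1 / (8 * M ^ 2)) := by
      apply mul_le_mul_of_nonneg_left hN.le (by positivity)
    have h2 : M ^ 2 * (1 / (8 * M ^ 2)) = 1 / 8 := by
      field_simp
    linarith
  -- pigeonhole: discretize the first N coordinates over the integer points
  set C : ℤ := ⌈M / δ⌉ with hC
  have hmem : ∀ (k : ℕ) (x : ℝ), ⌊ψ k x / δ⌋ ∈ Finset.Icc (-C) C := by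
    intro k x
    have habs : |ψ k x / δ| ≤ M / δ := by
      rw [abs_div, abs_of_pos hδ0]
      gcongr
      exact hψ k x
    rw [Finset.mem_Icc, hC]
    refine ⟨?_, ?_⟩
    · have h2 : ⌊-(M / δ)⌋ ≤ ⌊ψ k x / δ⌋ := Int.floor_mono (neg_le_of_abs_le habs)
      rw [Int.floor_neg] at h2
      exact h2
    · exact (Int.floor_mono (le_of_abs_le habs)).trans (Int.floor_le_ceil _)
  have : ∃ i j : ℕ, i ≠ j ∧
      (fun (i : ℕ) (k : Fin N) => (⟨⌊ψ k (i : ℝ) / δ⌋, hmem k i⟩ : Finset.Icc (-C) C)) i =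
      (fun (i : ℕ) (k : Fin N) => (⟨⌊ψ k (i : ℝ) / δ⌋, hmem k i⟩ : Finset.Icc (-C) C)) j :=
    Finite.exists_ne_map_eq_of_infinite _
  obtain ⟨i, j, hij, heq⟩ := this
  set x : ℝ := (i : ℝ)
  set y : ℝ := (j : ℝ)
  -- the coordinates are close
  have hclose : ∀ k : ℕ, k < N → |ψ k x - ψ k y| ≤ δ := by
    intro k hk
    have h1 : ⌊ψ k x / δ⌋ = ⌊ψ k y / δ⌋ := by
      have := congrFun heq ⟨k, hk⟩
      exact Subtype.ext_iff.mp this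
    have h2 : |ψ k x / δ - ψ k y / δ| < 1 := Int.abs_sub_lt_one_of_floor_eq_floor h1
    have h3 : |(ψ k x - ψ k y) / δ| < 1 := by rwa [sub_div]
    rw [abs_div, abs_of_pos hδ0, div_lt_one hδ0] at h3
    exact h3.le
  -- decompose the diagonal at x
  have hdx := hdiag x
  have hdxsum := hdx.summable
  have hdx_split : (∑ k ∈ Finset.range N, lam k * ψ k x * ψ k x)
      + ∑' k, lam (k + N) * ψ (k + N) x * ψ (k + N) x = 1 := by
    rw [Summable.sum_add_tsum_nat_add N hdxsum, hdx.tsum_eq]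
  have hdx_tail := gaussian_tail_bound lam hlam hsum M (fun k => ψ k x) (fun k => ψ k x)
      (fun k => hψ k x) (fun k => hψ k x) N
  have hhead_xx : (7:ℝ)/8 ≤ ∑ k ∈ Finset.range N, lam k * ψ k x * ψ k x := by
    have := abs_le.mp hdx_tail
    linarith [hdx_tail, htailN, this.2]
  -- decompose the off-diagonal
  have hxy := hK x y
  have hxysum := hxy.summable
  have hxy_split : (∑ k ∈ Finset.range N, lam k * ψ k x * ψ k y)
      + ∑' k, lam (k + N) * ψ (k + N) x * ψ (k + N) y = Real.exp (-(x - y) ^ 2) := by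
    rw [Summable.sum_add_tsum_nat_add N hxysum, hxy.tsum_eq]
  have hxy_tail := gaussian_tail_bound lam hlam hsum M (fun k => ψ k x) (fun k => ψ k y)
      (fun k => hψ k x) (fun k => hψ k y) N
  -- compare heads
  have hpart : ∑ k ∈ Finset.range N, lam k ≤ S := Summable.sum_le_tsum _ (fun k _ => hlam k) hsum
  have hhead_cmp : ∑ k ∈ Finset.range N, lam k * ψ k x * ψ k x
      - ∑ k ∈ Finset.range N, lam k * ψ k x * ψ k y ≤ 1/8 := by
    have h1 : ∑ k ∈ Finset.range N, lam k * ψ k x * ψ k x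
        - ∑ k ∈ Finset.range N, lam k * ψ k x * ψ k y
        = ∑ k ∈ Finset.range N, lam k * ψ k x * (ψ k x - ψ k y) := by
      rw [← Finset.sum_sub_distrib]
      congr 1; ext k; ring
    rw [h1]
    have h2 : ∀ k ∈ Finset.range N, lam k * ψ k x * (ψ k x - ψ k y) ≤ lam k * (M * δ) := by
      intro k hk
      have hb : |ψ k x * (ψ k x - ψ k y)| ≤ M * δ := by
        rw [abs_mul]
        exact mul_le_mul (hψ k x) (hclose k (Finset.mem_range.mp hk)) (abs_nonneg _) hM.le
      calc lam k * ψ k x * (ψ k x - ψ k y)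
          ≤ lam k * |ψ k x * (ψ k x - ψ k y)| := by
            rw [mul_assoc]
            exact mul_le_mul_of_nonneg_left (le_abs_self _) (hlam k)
        _ ≤ lam k * (M * δ) := mul_le_mul_of_nonneg_left hb (hlam k)
    calc ∑ k ∈ Finset.range N, lam k * ψ k x * (ψ k x - ψ k y)
        ≤ ∑ k ∈ Finset.range N, lam k * (M * δ) := Finset.sum_le_sum h2
      _ = (∑ k ∈ Finset.range N, lam k) * (M * δ) := by rw [Finset.sum_mul]
      _ ≤ S * (M * δ) := by
          apply mul_le_mul_of_nonneg_right hpart (by positivity)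
      _ ≤ 1/8 := by
          have hδ1 : δ * (8 * M * (S + 1)) = 1 := by
            rw [hδ]
            field_simp
          nlinarith [mul_nonneg hM.le hδ0.le, hδ1, hS0, mul_nonneg hS0 (mul_nonneg hM.le hδ0.le)]
  -- lower bound on the kernel value
  have hlow : (1:ℝ)/2 < Real.exp (-(x - y) ^ 2) := by
    have habs := abs_le.mp hxy_tail
    have : (5:ℝ)/8 ≤ Real.exp (-(x - y) ^ 2) := by linarith [habs.1, htailN]
    linarith
  -- upper bound on the kernel value
  have hup : Real.exp (-(x - y) ^ 2) ≤ Real.exp (-1) := by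
    apply Real.exp_le_exp.mpr
    have h1 : (1:ℝ) ≤ |x - y| := by
      have : x ≠ y := by
        simp only [x, y, Ne, Nat.cast_inj]
        exact hij
      have h2 : x - y ≠ 0 := sub_ne_zero.mpr this
      have h3 : ∃ m : ℤ, x - y = m := ⟨(i : ℤ) - (j : ℤ), by push_cast [x, y]; ring⟩
      obtain ⟨m, hm⟩ := h3
      rw [hm]
      rw [hm] at h2
      have : m ≠ 0 := by exact_mod_cast h2
      calc (1:ℝ) = ((1:ℤ):ℝ) := by norm_num
        _ ≤ |(m:ℝ)| := by
            rw [← Int.cast_abs]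
            exact_mod_cast Int.one_le_abs this
    have h2 : (1:ℝ) ≤ (x - y)^2 := by
      calc (1:ℝ) = 1 * 1 := by norm_num
        _ ≤ |x - y| * |x - y| := mul_le_mul h1 h1 (by norm_num) (abs_nonneg _)
        _ = (x - y)^2 := by rw [← abs_mul, abs_mul_self, sq]
    linarith
  have hexp : Real.exp (-1) < 1/2 := by
    rw [Real.exp_neg]
    have h2 : (2:ℝ) < Real.exp 1 := by
      have := Real.add_one_le_exp 1
      nlinarith [Real.exp_one_gt_d9]
    have h4 : Real.exp 1 * (Real.exp 1)⁻¹ = 1 := mul_inv_cancel₀ (by positivity)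
    have h5 : 0 < (Real.exp 1)⁻¹ := by positivity
    nlinarith
  linarith
end

section
/- Let F : [0,∞) → ℝ satisfy F(0) = 1 and F(r) → 0 as r → ∞, and suppose K(x,y) = F(|x−y|) is positive semidefinite on ℝ × ℝ. Let μ be a finite Borel measure on ℝ, let λ_k ≥ 0, and let ψ_k : ℝ → ℝ be functions that are orthonormal in L²(μ) and satisfy K(x,y) = Σ_k λ_k ψ_k(x) ψ_k(y) pointwise for all x, y ∈ ℝ. Then the ψ_k are not uniformly bounded: there is no constant M < ∞ with |ψ_k(x)| ≤ M for all k and all x ∈ ℝ. -/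
open Filter MeasureTheory Finset

/-! Integrating the diagonal identity `∑ λₖ ψₖ(x)² = K(x, x) = 1` against the finite measure `μ`
gives `∑ λₖ ≤ μ(ℝ) < ∞`. If the `ψₖ` were bounded by `M`, the Weierstrass M-test would make the
Mercer series converge uniformly, so `K` is uniformly within `1/8` of the finite-rank kernel
`⟪w x, w y⟫` with `w x = (√λₖ ψₖ(x))_{k<N} ∈ ℝᴺ`. Then `w` is bounded, while `F(r) → 0` forces
`dist (w x) (w y) ≥ 1` once `|x - y|` is large: infinitely many such points cannot fit in a bounded
subset of `ℝᴺ`. -/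

section Summability

variable {α : Type*} [MeasurableSpace α]

theorem summable_of_hasSum_mul_self_eq_one (μ : Measure α) [IsFiniteMeasure μ]
    {lam : ℕ → ℝ} (hlam : ∀ k, 0 ≤ lam k) {ψ : ℕ → α → ℝ}
    (hnorm : ∀ k, ∫ x, ψ k x * ψ k x ∂μ = 1)
    (hdiag : ∀ x, HasSum (fun k => lam k * ψ k x * ψ k x) 1) :
    Summable lam := by
  have hint : ∀ k, Integrable (fun x => lam k * ψ k x * ψ k x) μ := fun k => by
    have : Integrable (fun x => ψ k x * ψ k x) μ :=
      Integrable.of_integral_ne_zero (by rw [hnorm k]; exact one_ne_zero)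
    simpa only [mul_assoc] using this.const_mul (lam k)
  refine summable_of_sum_range_le (c := μ.real Set.univ) hlam fun n => ?_
  calc ∑ k ∈ range n, lam k
      = ∫ x, ∑ k ∈ range n, lam k * ψ k x * ψ k x ∂μ := by
        rw [integral_finsetSum _ fun k _ => hint k]
        simp only [mul_assoc, integral_const_mul, hnorm, mul_one]
    _ ≤ ∫ _, (1 : ℝ) ∂μ :=
        integral_mono (integrable_finsetSum _ fun k _ => hint k) (integrable_const 1)
          fun x => sum_le_hasSum _ (fun k _ => by
            simpa only [mul_assoc] using mul_nonneg (hlam k) (mul_self_nonneg (ψ k x))) (hdiag x)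
    _ = μ.real Set.univ := by simp

end Summability

theorem exists_forall_abs_sub_sum_range_lt {β : Type*} {f : ℕ → β → ℝ} {u : ℕ → ℝ}
    (hu : Summable u) (hfu : ∀ n x, |f n x| ≤ u n) {g : β → ℝ}
    (hg : ∀ x, HasSum (fun n => f n x) (g x)) {ε : ℝ} (hε : 0 < ε) :
    ∃ N, ∀ x, |g x - ∑ n ∈ range N, f n x| < ε := by
  obtain ⟨N, hN⟩ :=
    (Metric.tendstoUniformly_iff.mp (tendstoUniformly_tsum_nat hu (f := f) hfu) ε hε).exists
  refine ⟨N, fun x => ?_⟩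
  simpa only [(hg x).tsum_eq, Real.dist_eq] using hN x

theorem exists_ne_dist_lt_of_isBounded_range {E : Type*} [MetricSpace E] [ProperSpace E]
    {u : ℕ → E} (hu : Bornology.IsBounded (Set.range u)) {ε : ℝ} (hε : 0 < ε) :
    ∃ i j, i ≠ j ∧ dist (u i) (u j) < ε := by
  obtain ⟨_, -, φ, hφ, hlim⟩ :=
    hu.isCompact_closure.tendsto_subseq fun n => subset_closure (Set.mem_range_self n)
  obtain ⟨n, hn⟩ := Metric.cauchySeq_iff.mp hlim.cauchySeq ε hε
  exact ⟨φ n, φ (n + 1), (hφ n.lt_succ_self).ne, hn n le_rfl (n + 1) n.le_succ⟩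

theorem not_isBounded_range_of_separated {E : Type*} [MetricSpace E] [ProperSpace E]
    {w : ℝ → E} {T δ : ℝ} (hδ : 0 < δ) (hsep : ∀ x y, T ≤ |x - y| → δ ≤ dist (w x) (w y)) :
    ¬ Bornology.IsBounded (Set.range w) := by
  intro hw
  set c := |T| + 1
  obtain ⟨i, j, hij, hlt⟩ := exists_ne_dist_lt_of_isBounded_range (u := fun n : ℕ => w (n * c))
    (hw.subset (Set.range_comp_subset_range _ w)) hδ
  refine (hsep _ _ ?_).not_gt hlt
  have hij' : (1 : ℝ) ≤ |(i : ℝ) - j| := by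
    exact_mod_cast Int.one_le_abs (sub_ne_zero.mpr (Int.ofNat_inj.not.mpr hij))
  calc T ≤ |T| + 1 := by linarith [le_abs_self T]
    _ ≤ |(i : ℝ) - j| * c := le_mul_of_one_le_left (by positivity) hij'
    _ = |i * c - j * c| := by rw [← sub_mul, abs_mul, abs_of_pos (by positivity : 0 < c)]

section FeatureMap

variable {α : Type*}

noncomputable def truncatedFeatureMap (lam : ℕ → ℝ) (ψ : ℕ → α → ℝ) (N : ℕ) (x : α) :
    EuclideanSpace ℝ (Fin N) :=
  WithLp.toLp 2 fun k => √(lam k) * ψ k x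

variable {lam : ℕ → ℝ} {ψ : ℕ → α → ℝ} {N : ℕ}

theorem inner_truncatedFeatureMap (hlam : ∀ k, 0 ≤ lam k) (x y : α) :
    inner ℝ (truncatedFeatureMap lam ψ N x) (truncatedFeatureMap lam ψ N y) =
      ∑ k ∈ range N, lam k * ψ k x * ψ k y := by
  rw [PiLp.inner_apply, ← Fin.sum_univ_eq_sum_range (fun k => lam k * ψ k x * ψ k y)]
  refine Finset.sum_congr rfl fun k _ => ?_
  simp only [truncatedFeatureMap, RCLike.inner_apply, conj_trivial]
  linear_combination (ψ k x * ψ k y) * Real.mul_self_sqrt (hlam k)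

theorem exists_forall_abs_sub_inner_truncatedFeatureMap_lt (hlam : ∀ k, 0 ≤ lam k)
    (hsum : Summable lam) {M : ℝ} (hM : ∀ k x, |ψ k x| ≤ M) {K : α → α → ℝ}
    (hexp : ∀ x y, HasSum (fun k => lam k * ψ k x * ψ k y) (K x y)) {ε : ℝ} (hε : 0 < ε) :
    ∃ N, ∀ x y,
      |K x y - inner ℝ (truncatedFeatureMap lam ψ N x) (truncatedFeatureMap lam ψ N y)| < ε := by
  have hterm : ∀ k x y, |lam k * ψ k x * ψ k y| ≤ lam k * (M * M) := fun k x y => by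
    rw [abs_mul, abs_mul, abs_of_nonneg (hlam k), mul_assoc]
    exact mul_le_mul_of_nonneg_left (mul_le_mul (hM k x) (hM k y) (abs_nonneg _)
      ((abs_nonneg _).trans (hM k x))) (hlam k)
  obtain ⟨N, hN⟩ := exists_forall_abs_sub_sum_range_lt (hsum.mul_right (M * M))
    (f := fun k (p : α × α) => lam k * ψ k p.1 * ψ k p.2) (fun k p => hterm k p.1 p.2)
    (fun p => hexp p.1 p.2) hε
  refine ⟨N, fun x y => ?_⟩
  rw [inner_truncatedFeatureMap hlam]
  exact hN (x, y)

end FeatureMap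

theorem rbf_mercer_eigenfunctions_not_uniformly_bounded_general
    (F : ℝ → ℝ) (hF0 : F 0 = 1) (hFlim : Tendsto F atTop (nhds 0))
    (K : ℝ → ℝ → ℝ) (hK : ∀ x y, K x y = F |x - y|)
    (μ : Measure ℝ) [IsFiniteMeasure μ]
    (lam : ℕ → ℝ) (hlam : ∀ k, 0 ≤ lam k)
    (ψ : ℕ → ℝ → ℝ)
    (horth : ∀ k h : ℕ, ∫ x, ψ k x * ψ h x ∂μ = if k = h then 1 else 0)
    (hexp : ∀ x y : ℝ, HasSum (fun k : ℕ => lam k * ψ k x * ψ k y) (K x y)) :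
    ¬ ∃ M : ℝ, ∀ (k : ℕ) (x : ℝ), |ψ k x| ≤ M := by
  rintro ⟨M, hM⟩
  have hKdiag : ∀ x, K x x = 1 := fun x => by rw [hK, sub_self, abs_zero, hF0]
  have hdiag : ∀ x, HasSum (fun k => lam k * ψ k x * ψ k x) 1 := fun x => hKdiag x ▸ hexp x x
  have hsum : Summable lam :=
    summable_of_hasSum_mul_self_eq_one μ hlam (fun k => by simpa using horth k k) hdiag
  obtain ⟨N, hKw⟩ := exists_forall_abs_sub_inner_truncatedFeatureMap_lt hlam hsum hM hexp
    (by norm_num : (0 : ℝ) < 1 / 8)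
  set w := truncatedFeatureMap lam ψ N
  obtain ⟨T, hT⟩ := eventually_atTop.mp (hFlim.eventually_lt_const (by norm_num : (0 : ℝ) < 1 / 8))
  refine not_isBounded_range_of_separated (w := w) (T := T) one_pos (fun x y hxy => ?_) ?_
  · have hxx := abs_lt.mp (hKw x x)
    have hyy := abs_lt.mp (hKw y y)
    have hKxy := abs_lt.mp (hKw x y)
    rw [hKdiag] at hxx hyy
    have hfar : K x y < 1 / 8 := hK x y ▸ hT _ hxy
    have : 1 ≤ dist (w x) (w y) ^ 2 := by
      rw [dist_eq_norm, norm_sub_sq_real, ← real_inner_self_eq_norm_sq,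
        ← real_inner_self_eq_norm_sq]
      linarith
    nlinarith [dist_nonneg (x := w x) (y := w y)]
  · refine isBounded_iff_forall_norm_le.mpr ⟨2, ?_⟩
    rintro _ ⟨x, rfl⟩
    have hxx := abs_lt.mp (hKw x x)
    rw [hKdiag, real_inner_self_eq_norm_sq] at hxx
    nlinarith [norm_nonneg (w x)]

/-- No Mercer expansion of a radial basis function kernel (with `F 0 = 1` and
`F(r) → 0` at infinity) with respect to a finite measure can have eigenfunctions
all lying in a ball of `L^∞`: if the `ψ k` are orthonormal in `L²(μ)` and give a
pointwise expansion of `K`, they cannot be uniformly bounded. -/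
theorem rbf_mercer_eigenfunctions_not_uniformly_bounded
    (F : ℝ → ℝ) (hF0 : F 0 = 1) (hFlim : Tendsto F atTop (nhds 0))
    (K : ℝ → ℝ → ℝ) (hK : ∀ x y, K x y = F |x - y|)
    (hPSD : ∀ (n : ℕ) (x a : Fin n → ℝ),
      0 ≤ ∑ i, ∑ j, a i * a j * K (x i) (x j))
    (μ : Measure ℝ) [IsFiniteMeasure μ]
    (lam : ℕ → ℝ) (hlam : ∀ k, 0 ≤ lam k)
    (ψ : ℕ → ℝ → ℝ)
    (horth : ∀ k h : ℕ, ∫ x, ψ k x * ψ h x ∂μ = if k = h then 1 else 0)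
    (hexp : ∀ x y : ℝ, HasSum (fun k : ℕ => lam k * ψ k x * ψ k y) (K x y)) :
    ¬ ∃ M : ℝ, ∀ (k : ℕ) (x : ℝ), |ψ k x| ≤ M :=
  rbf_mercer_eigenfunctions_not_uniformly_bounded_general F hF0 hFlim K hK μ lam hlam ψ horth hexp
end

section
/- Let F : [0,∞) → ℝ satisfy F(0) = 1 and F(r) → 0 as r → ∞, and let K(x,y) = F(|x−y|) be positive semidefinite on ℝ × ℝ. Let ψ : ℝ → ℝ and λ > 0 be such that for every n, all points x_1,…,x_n ∈ ℝ and all reals a_1,…,a_n, one has Σ_{i,j=1}^n a_i a_j K(x_i,x_j) ≥ λ·(Σ_{i=1}^n a_i ψ(x_i))². Then ψ(x) → 0 as |x| → ∞. -/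
open Filter

/-- If the quadratic form of a radial basis function kernel `K(x,y) = F(|x-y|)`
(with `F 0 = 1`, `F(r) → 0` at infinity) dominates `λ (∑ a_i ψ(x_i))²` for some
`λ > 0`, then `ψ(x) → 0` as `|x| → ∞`. -/
theorem rbf_dominated_factor_vanishes_at_infinity
    (F : ℝ → ℝ) (hF0 : F 0 = 1) (hFlim : Tendsto F atTop (nhds 0))
    (K : ℝ → ℝ → ℝ) (hK : ∀ x y, K x y = F |x - y|)
    (hPSD : ∀ (n : ℕ) (x a : Fin n → ℝ),
      0 ≤ ∑ i, ∑ j, a i * a j * K (x i) (x j))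
    (ψ : ℝ → ℝ) (lam : ℝ) (hlam : 0 < lam)
    (hdom : ∀ (n : ℕ) (x a : Fin n → ℝ),
      lam * (∑ i, a i * ψ (x i)) ^ 2 ≤ ∑ i, ∑ j, a i * a j * K (x i) (x j)) :
    Tendsto ψ (cocompact ℝ) (nhds 0) := by
  have key : ∀ ε : ℝ, 0 < ε → ∃ M : ℝ, ∀ x : ℝ, M ≤ |x| → |ψ x| < ε := by
    intro ε hε
    by_contra h
    push_neg at h
    -- h : ∀ M, ∃ x, M ≤ |x| ∧ ε ≤ |ψ x|
    set δ := lam * ε ^ 2 / 4 with hδdef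
    have hδ : 0 < δ := by positivity
    obtain ⟨R, hR⟩ := Metric.tendsto_atTop.mp hFlim δ hδ
    set R0 := max R 0 with hR0def
    have hR0 : 0 ≤ R0 := le_max_right _ _
    have hR' : ∀ r : ℝ, R0 ≤ r → |F r| < δ := by
      intro r hr
      have := hR r (le_trans (le_max_left _ _) hr)
      simpa [Real.dist_eq] using this
    obtain ⟨f, hf⟩ : ∃ f : ℝ → ℝ, ∀ M, M ≤ |f M| ∧ ε ≤ |ψ (f M)| :=
      ⟨fun M => (h M).choose, fun M => (h M).choose_spec⟩
    set xs : ℕ → ℝ := fun n => Nat.rec (f R0) (fun _ p => f (|p| + R0)) n with hxs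
    have hψε : ∀ k, ε ≤ |ψ (xs k)| := by
      intro k
      cases k with
      | zero => exact (hf R0).2
      | succ m => exact (hf (|xs m| + R0)).2
    have hgap : ∀ k, |xs k| + R0 ≤ |xs (k + 1)| := fun k => (hf (|xs k| + R0)).1
    have hmono : ∀ i j : ℕ, i < j → |xs i| + R0 ≤ |xs j| := by
      intro i j hij
      induction j with
      | zero => omega
      | succ m ih =>
        rcases Nat.lt_succ_iff_lt_or_eq.mp hij with hlt | heq
        · have h1 := ih hlt
          have h2 := hgap m
          linarith
        · subst heq; exact hgap i
    have hdist : ∀ i j : ℕ, i ≠ j → R0 ≤ |xs i - xs j| := by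
      have base : ∀ i j : ℕ, i < j → R0 ≤ |xs i - xs j| := by
        intro i j hij
        have h1 := hmono i j hij
        have h2 : |xs j| - |xs i| ≤ |xs j - xs i| := by
          have := abs_sub_abs_le_abs_sub (xs j) (xs i)
          linarith [le_abs_self (|xs j| - |xs i|)]
        rw [abs_sub_comm]
        linarith
      intro i j hij
      rcases lt_or_gt_of_ne hij with hlt | hgt
      · exact base i j hlt
      · rw [abs_sub_comm]; exact base j i hgt
    -- choose n large
    obtain ⟨n, hn⟩ := exists_nat_gt (2 / (lam * ε ^ 2))
    have hn1 : 1 ≤ (n : ℝ) := by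
      have : (0:ℝ) < 2 / (lam * ε ^ 2) := by positivity
      have : (0:ℝ) < n := lt_trans this hn
      exact_mod_cast Nat.one_le_iff_ne_zero.mpr (by exact_mod_cast this.ne')
    have hnlam : 2 < (n : ℝ) * (lam * ε ^ 2) := by
      rw [div_lt_iff₀ (by positivity)] at hn
      linarith
    set x : Fin n → ℝ := fun i => xs i with hxdef
    set a : Fin n → ℝ := fun i => if 0 ≤ ψ (xs i) then 1 else -1 with hadef
    have haterm : ∀ i : Fin n, a i * ψ (x i) = |ψ (xs i)| := by
      intro i
      simp only [hadef, hxdef]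
      split
      · rw [abs_of_nonneg ‹_›]; ring
      · rw [abs_of_neg (lt_of_not_ge ‹_›)]; ring
    have haabs : ∀ i : Fin n, |a i| = 1 := by
      intro i; simp only [hadef]; split <;> simp
    have hS : (n : ℝ) * ε ≤ ∑ i, a i * ψ (x i) := by
      calc (n : ℝ) * ε = ∑ _i : Fin n, ε := by
            rw [Finset.sum_const, Finset.card_univ, Fintype.card_fin, nsmul_eq_mul]
        _ ≤ ∑ i, a i * ψ (x i) := by
            apply Finset.sum_le_sum
            intro i _
            rw [haterm i]
            exact hψε i
    have hLHS : lam * ((n : ℝ) * ε) ^ 2 ≤ lam * (∑ i, a i * ψ (x i)) ^ 2 := by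
      apply mul_le_mul_of_nonneg_left _ hlam.le
      exact pow_le_pow_left₀ (by positivity) hS 2
    have hterm : ∀ i j : Fin n,
        a i * a j * K (x i) (x j) ≤ δ + (if i = j then 1 else 0) := by
      intro i j
      by_cases hij : i = j
      · subst hij
        have hKii : K (x i) (x i) = 1 := by rw [hK]; simpa using hF0
        have : a i * a i = 1 := by simp only [hadef]; split <;> norm_num
        rw [hKii, this]
        simp [hδ.le]
      · have hne : (i : ℕ) ≠ (j : ℕ) := fun hc => hij (Fin.ext hc)
        have hKij : |K (x i) (x j)| < δ := by
          rw [hK]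
          exact hR' _ (hdist i j hne)
        have : |a i * a j * K (x i) (x j)| < δ := by
          rw [abs_mul, abs_mul, haabs i, haabs j]
          simpa using hKij
        have h2 := le_abs_self (a i * a j * K (x i) (x j))
        simp only [if_neg hij]
        linarith
    have hRHS : ∑ i, ∑ j, a i * a j * K (x i) (x j) ≤ (n : ℝ) ^ 2 * δ + n := by
      calc ∑ i, ∑ j, a i * a j * K (x i) (x j)
          ≤ ∑ i : Fin n, ∑ j : Fin n, (δ + if i = j then (1:ℝ) else 0) := by
            apply Finset.sum_le_sum; intro i _
            apply Finset.sum_le_sum; intro j _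
            exact hterm i j
        _ = (n : ℝ) ^ 2 * δ + n := by
            simp [Finset.sum_add_distrib, Finset.sum_ite_eq, Finset.card_univ]
            ring
    have hmain := hdom n x a
    nlinarith [sq_nonneg ((n:ℝ) * ε), mul_pos hlam (pow_pos hε 2)]
  rw [Metric.tendsto_nhds]
  intro ε hε
  obtain ⟨M, hM⟩ := key ε hε
  have hcompl : (Metric.closedBall (0:ℝ) M)ᶜ ∈ cocompact ℝ :=
    (isCompact_closedBall (0:ℝ) M).compl_mem_cocompact
  filter_upwards [hcompl] with y hy
  have : M < |y| := by
    simp only [Set.mem_compl_iff, Metric.mem_closedBall, Real.dist_eq, sub_zero,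
      not_le] at hy
    exact hy
  simpa [Real.dist_eq] using hM y this.le
end

section
/- Let F : [0,∞) → ℝ satisfy F(0) = 1 and F(r) → 0 as r → ∞, and let K(x,y) = F(|x−y|) be positive semidefinite on ℝ × ℝ. Suppose K(x,y) = Σ_k λ_k ψ_k(x) ψ_k(y) pointwise for all x, y ∈ ℝ, where λ_k > 0 and ψ_k : ℝ → ℝ. Then for every k, ψ_k(x) → 0 as |x| → ∞. -/
open Filter

/-- If a positive semidefinite radial basis function kernel `K(x,y) = F(|x-y|)`
(with `F 0 = 1`, `F(r) → 0` at infinity) admits a pointwise expansion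
`K(x,y) = ∑ k, lam k * ψ k x * ψ k y` with strictly positive weights, then every
basis function `ψ k` tends to `0` as `|x| → ∞`. -/
theorem rbf_expansion_basis_vanish_at_infinity
    (F : ℝ → ℝ) (hF0 : F 0 = 1) (hFlim : Tendsto F atTop (nhds 0))
    (K : ℝ → ℝ → ℝ) (hK : ∀ x y, K x y = F |x - y|)
    (hPSD : ∀ (n : ℕ) (x a : Fin n → ℝ),
      0 ≤ ∑ i, ∑ j, a i * a j * K (x i) (x j))
    (lam : ℕ → ℝ) (hlam : ∀ k, 0 < lam k)
    (ψ : ℕ → ℝ → ℝ)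
    (hexp : ∀ x y : ℝ, HasSum (fun k : ℕ => lam k * ψ k x * ψ k y) (K x y)) :
    ∀ k : ℕ, Tendsto (ψ k) (cocompact ℝ) (nhds 0) := by
  intro k
  rw [Metric.tendsto_nhds]
  intro ε hε
  by_contra hcon
  rw [Filter.eventually_iff, mem_cocompact] at hcon
  push_neg at hcon
  have H : ∀ r : ℝ, ∃ x, r < |x| ∧ ε ≤ |ψ k x| := by
    intro r
    obtain ⟨x, hx1, hx2⟩ := Set.not_subset.mp
      (hcon (Metric.closedBall 0 r) (isCompact_closedBall 0 r))
    refine ⟨x, ?_, ?_⟩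
    · have : ¬ |x| ≤ r := by simpa [Metric.mem_closedBall, Real.dist_eq] using hx1
      linarith [not_le.mp this]
    · simpa [Real.dist_eq, not_lt] using hx2
  choose g hg1 hg2 using H
  have hlamk := hlam k
  set δ : ℝ := lam k * ε ^ 2 / 2 with hδdef
  have hδ : 0 < δ := by positivity
  obtain ⟨R0, hR0⟩ := Filter.eventually_atTop.mp (Metric.tendsto_nhds.mp hFlim δ hδ)
  set R : ℝ := max R0 0 with hRdef
  have hRnn : 0 ≤ R := le_max_right _ _
  have hR : ∀ r : ℝ, R ≤ r → |F r| ≤ δ := by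
    intro r hr
    have := hR0 r (le_trans (le_max_left _ _) hr)
    rw [Real.dist_eq, sub_zero] at this
    linarith
  obtain ⟨N, hN⟩ := exists_nat_gt (2 / (lam k * ε ^ 2))
  -- construct points going to infinity
  let u : ℕ → ℝ := fun n => Nat.rec (g 0) (fun _ p => g (|p| + R)) n
  have hu_psi : ∀ n, ε ≤ |ψ k (u n)| := by
    intro n
    cases n with
    | zero => exact hg2 0
    | succ m => exact hg2 _
  have hu_gap : ∀ n, |u n| + R < |u (n + 1)| := fun n => hg1 (|u n| + R)
  have hu_mono : ∀ j i : ℕ, i < j → |u i| + R ≤ |u j| := by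
    intro j
    induction j with
    | zero => intro i h; omega
    | succ m ih =>
      intro i h
      rcases Nat.lt_succ_iff_lt_or_eq.mp h with h | h
      · calc |u i| + R ≤ |u m| := ih i h
          _ ≤ |u m| + R := le_add_of_nonneg_right hRnn
          _ ≤ |u (m + 1)| := (hu_gap m).le
      · subst h; exact (hu_gap i).le
  have hdist : ∀ i j : ℕ, i ≠ j → R ≤ |u i - u j| := by
    have base : ∀ i j : ℕ, i < j → R ≤ |u i - u j| := by
      intro i j h
      have h1 := hu_mono j i h
      calc R ≤ |u j| - |u i| := by linarith
        _ ≤ |u j - u i| := abs_sub_abs_le_abs_sub _ _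
        _ = |u i - u j| := abs_sub_comm _ _
    intro i j hij
    rcases hij.lt_or_gt with h | h
    · exact base i j h
    · rw [abs_sub_comm]; exact base j i h
  -- signs
  let s : ℕ → ℝ := fun i => if 0 ≤ ψ k (u i) then 1 else -1
  have hs_abs : ∀ i, s i * ψ k (u i) = |ψ k (u i)| := by
    intro i
    rcases le_or_gt 0 (ψ k (u i)) with h | h
    · simp [s, h, abs_of_nonneg h]
    · simp [s, not_le.mpr h, abs_of_neg h]
  have hs_sq : ∀ i, s i * s i = 1 := by
    intro i
    rcases le_or_gt 0 (ψ k (u i)) with h | h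
    · simp [s, h]
    · simp [s, not_le.mpr h]
  have hs_abs1 : ∀ i, |s i| = 1 := by
    intro i
    rcases le_or_gt 0 (ψ k (u i)) with h | h
    · simp [s, h]
    · simp [s, not_le.mpr h]
  set S : ℝ := ∑ i ∈ Finset.range N, ∑ j ∈ Finset.range N, s i * s j * K (u i) (u j) with hS
  have hsum : HasSum (fun m => lam m * (∑ i ∈ Finset.range N, s i * ψ m (u i)) ^ 2) S := by
    have h1 : HasSum (fun m => ∑ i ∈ Finset.range N, ∑ j ∈ Finset.range N,
        s i * s j * (lam m * ψ m (u i) * ψ m (u j))) S := by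
      apply hasSum_sum
      intro i _
      apply hasSum_sum
      intro j _
      exact (hexp (u i) (u j)).mul_left _
    convert h1 using 1
    funext m
    rw [sq, Finset.sum_mul_sum, Finset.mul_sum]
    refine Finset.sum_congr rfl fun i _ => ?_
    rw [Finset.mul_sum]
    exact Finset.sum_congr rfl fun j _ => by ring
  -- lower bound
  have hlow : lam k * ((N : ℝ) * ε) ^ 2 ≤ S := by
    have h1 : lam k * (∑ i ∈ Finset.range N, s i * ψ k (u i)) ^ 2 ≤ S :=
      le_hasSum hsum k (fun j _ => mul_nonneg (hlam j).le (sq_nonneg _))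
    refine le_trans ?_ h1
    have h2 : (N : ℝ) * ε ≤ ∑ i ∈ Finset.range N, s i * ψ k (u i) := by
      calc (N : ℝ) * ε = ∑ _i ∈ Finset.range N, ε := by
            rw [Finset.sum_const, Finset.card_range, nsmul_eq_mul]
        _ ≤ _ := Finset.sum_le_sum fun i _ => by rw [hs_abs i]; exact hu_psi i
    have hNε : 0 ≤ (N : ℝ) * ε := by positivity
    exact mul_le_mul_of_nonneg_left (pow_le_pow_left₀ hNε h2 2) (hlam k).le
  -- upper bound
  have key : ∀ i j : ℕ, i ≠ j → s i * s j * K (u i) (u j) ≤ δ := by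
    intro i j hij
    have habs : |s i * s j * K (u i) (u j)| = |F (|u i - u j|)| := by
      rw [hK, abs_mul, abs_mul, hs_abs1, hs_abs1, one_mul, one_mul]
    calc s i * s j * K (u i) (u j) ≤ |s i * s j * K (u i) (u j)| := le_abs_self _
      _ = |F (|u i - u j|)| := habs
      _ ≤ δ := hR _ (hdist i j hij)
  have keyd : ∀ i : ℕ, s i * s i * K (u i) (u i) = 1 := by
    intro i
    rw [hK, sub_self, abs_zero, hF0, mul_one, hs_sq]
  have hup : S ≤ (N : ℝ) + (N : ℝ) ^ 2 * δ := by
    have step1 : S ≤ ∑ i ∈ Finset.range N, ∑ j ∈ Finset.range N,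
        ((if i = j then (1 : ℝ) else 0) + δ) := by
      refine Finset.sum_le_sum fun i _ => Finset.sum_le_sum fun j _ => ?_
      by_cases h : i = j
      · subst h; rw [keyd i]; simp [hδ.le]
      · simp only [h, if_false, zero_add]; exact key i j h
    have step2 : ∀ i ∈ Finset.range N,
        ∑ j ∈ Finset.range N, ((if i = j then (1 : ℝ) else 0) + δ) ≤ 1 + (N : ℝ) * δ := by
      intro i hi
      rw [Finset.sum_add_distrib, Finset.sum_ite_eq, Finset.sum_const, Finset.card_range,
        nsmul_eq_mul]
      simp [hi]
    refine step1.trans ((Finset.sum_le_sum step2).trans ?_)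
    rw [Finset.sum_const, Finset.card_range, nsmul_eq_mul]
    exact le_of_eq (by ring)
  -- contradiction
  have ha : 0 < lam k * ε ^ 2 := by positivity
  have h2N : 2 < (N : ℝ) * (lam k * ε ^ 2) := by
    rw [div_lt_iff₀ ha] at hN
    linarith
  have hNpos : 0 < (N : ℝ) := by nlinarith
  have hfin : lam k * ((N : ℝ) * ε) ^ 2 ≤ (N : ℝ) + (N : ℝ) ^ 2 * (lam k * ε ^ 2 / 2) :=
    hlow.trans hup
  nlinarith [mul_lt_mul_of_pos_left h2N hNpos]
end

section
/- For every fixed y ∈ ℝ, lim_{k→∞} (2πk)^{1/4}·√(2^k/k!)·(√(k/2)+y)^k·e^{−(√(k/2)+y)²} = e^{−2y²}. That is, near its peak at √(k/2) the basis function ψ_k(x) = √(2^k/k!)·x^k·e^{−x²} is asymptotically the Gaussian profile (2πk)^{−1/4}·e^{−2(x−√(k/2))²}. -/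
/-! Write `s = √(k/2)`, so that `k = 2 s²`. Stirling's formula `k! = σ_k √(2k) (k/e)^k`, with
`σ_k → √π`, turns the prefactor `(2πk)^(1/4) √(2^k/k!)` into `π^(1/4) / √σ_k · (√e / s)^k`, and
then the whole expression is `π^(1/4) / √σ_k · exp (2 s² (log (1 + y/s) - y/s) - y²)`.
Since `log (1 + x) = x - x²/2 + O(x³)`, the term `s² (log (1 + y/s) - y/s)` tends to `-y²/2`,
so the limit is `exp (-y² - y²)`. -/

open Filter Real Asymptotics Topology

lemma Real.log_one_add_sub_self_add_sq_div_two_isBigO :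
    (fun x : ℝ ↦ log (1 + x) - x + x ^ 2 / 2) =O[𝓝 0] fun x ↦ x ^ 3 := by
  refine isBigO_iff.2 ⟨2, ?_⟩
  filter_upwards [eventually_norm_sub_lt 0 (by norm_num : (0 : ℝ) < 1 / 2)] with x hx
  rw [sub_zero, norm_eq_abs] at hx
  have htaylor : |log (1 + x) - x + x ^ 2 / 2| ≤ |x| ^ 3 / (1 - |x|) := by
    have h := abs_log_sub_add_sum_range_le (x := -x) (by rw [abs_neg]; linarith) 2
    rw [abs_neg] at h
    convert h using 2
    simp only [Finset.sum_range_succ, Finset.sum_range_zero]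
    push_cast
    ring_nf
  rw [norm_eq_abs, norm_eq_abs, abs_pow]
  refine htaylor.trans ?_
  rw [div_le_iff₀ (by linarith)]
  nlinarith [pow_nonneg (abs_nonneg x) 3]

lemma tendsto_sq_mul_log_one_add_div_sub_div (y : ℝ) :
    Tendsto (fun s : ℝ ↦ s ^ 2 * (log (1 + y / s) - y / s)) atTop (𝓝 (-y ^ 2 / 2)) := by
  have hdiv : Tendsto (fun s : ℝ ↦ y / s) atTop (𝓝 0) := tendsto_const_nhds.div_atTop tendsto_id
  have hremainder : Tendsto (fun s : ℝ ↦ s ^ 2 * (log (1 + y / s) - y / s + (y / s) ^ 2 / 2))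
      atTop (𝓝 0) := by
    refine ((isBigO_refl (fun s : ℝ ↦ s ^ 2) atTop).mul
      (log_one_add_sub_self_add_sq_div_two_isBigO.comp_tendsto hdiv)).trans_tendsto ?_
    refine (tendsto_const_nhds (x := y ^ 3).div_atTop tendsto_id).congr' ?_
    filter_upwards [eventually_ne_atTop 0] with s hs
    simp only [Function.comp_apply, id]
    field_simp
  have hlimit := hremainder.sub_const (y ^ 2 / 2)
  rw [zero_sub, ← neg_div] at hlimit
  refine hlimit.congr' ?_
  filter_upwards [eventually_ne_atTop 0] with s hs
  field_simp
  ring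

lemma exp_half_div_pow_mul_add_pow_mul_exp {s y : ℝ} {n : ℕ} (hs : 0 < s) (hsy : 0 < s + y)
    (hn : (n : ℝ) = 2 * s ^ 2) :
    (exp (1 / 2) / s) ^ n * ((s + y) ^ n * exp (-(s + y) ^ 2)) =
      exp (2 * (s ^ 2 * (log (1 + y / s) - y / s)) - y ^ 2) := by
  have hratio : 0 < 1 + y / s := by rw [one_add_div hs.ne']; positivity
  have hpow : (exp (1 / 2) / s) ^ n * (s + y) ^ n = exp (n * log (1 + y / s) + n * (1 / 2)) := by
    rw [exp_add, exp_nat_mul, exp_nat_mul, exp_log hratio, ← mul_pow, ← mul_pow]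
    congr 1
    field_simp
  rw [← mul_assoc, hpow, ← exp_add]
  congr 1
  rw [hn]
  field_simp
  ring

lemma rpow_one_div_four_sq {x : ℝ} (hx : 0 ≤ x) : (x ^ ((1 : ℝ) / 4)) ^ 2 = √x := by
  rw [← rpow_natCast, ← rpow_mul hx, sqrt_eq_rpow]
  norm_num

lemma rpow_one_div_four_mul_sqrt_two_pow_div_factorial {k : ℕ} (hk : k ≠ 0) :
    (2 * π * k) ^ ((1 : ℝ) / 4) * √(2 ^ k / k.factorial) =
      π ^ ((1 : ℝ) / 4) / √(Stirling.stirlingSeq k) * (exp (1 / 2) / √(k / 2)) ^ k := by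
  have hk' : (0 : ℝ) < k := by positivity
  have hstirling : 0 < Stirling.stirlingSeq k := by
    unfold Stirling.stirlingSeq; positivity
  refine (sq_eq_sq₀ (by positivity) (by positivity)).1 ?_
  have hexp : exp (1 / 2) ^ 2 = exp 1 := by rw [← exp_nat_mul]; norm_num
  rw [mul_pow, mul_pow, div_pow (π ^ ((1 : ℝ) / 4)), rpow_one_div_four_sq (by positivity),
    rpow_one_div_four_sq pi_pos.le, sq_sqrt (by positivity), sq_sqrt hstirling.le, ← pow_mul,
    mul_comm k 2, pow_mul, div_pow, sq_sqrt (by positivity), hexp,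
    show 2 * π * k = π * (2 * k) by ring, sqrt_mul pi_pos.le, Stirling.stirlingSeq]
  field_simp [(exp_pos 1).ne', hk'.ne']
  rw [← mul_pow]
  congr 1
  field_simp

/-- Near its peak at `√(k/2)`, the basis function `ψ k x = √(2^k/k!) x^k e^{-x²}`
is asymptotically the Gaussian profile `(2πk)^(-1/4) * exp (-2(x - √(k/2))²)`:
for every fixed `y`,
`(2πk)^(1/4) * ψ k (√(k/2) + y) → exp (-2y²)` as `k → ∞`. -/
theorem gaussian_basis_local_profile (y : ℝ) :
    Tendsto
      (fun k : ℕ =>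
        (2 * Real.pi * (k : ℝ)) ^ ((1 : ℝ) / 4) *
          Real.sqrt (2 ^ k / (Nat.factorial k : ℝ)) *
          (Real.sqrt ((k : ℝ) / 2) + y) ^ k *
          Real.exp (-(Real.sqrt ((k : ℝ) / 2) + y) ^ 2))
      atTop (nhds (Real.exp (-2 * y ^ 2))) := by
  have hpeak : Tendsto (fun k : ℕ ↦ √((k : ℝ) / 2)) atTop atTop :=
    tendsto_sqrt_atTop.comp (tendsto_natCast_atTop_atTop.atTop_div_const two_pos)
  have hstirling : Tendsto (fun k : ℕ ↦ π ^ ((1 : ℝ) / 4) / √(Stirling.stirlingSeq k))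
      atTop (𝓝 1) := by
    have hlim : √√π = π ^ ((1 : ℝ) / 4) := by
      rw [← rpow_one_div_four_sq pi_pos.le, sqrt_sq (by positivity)]
    have h := tendsto_const_nhds (x := π ^ ((1 : ℝ) / 4)) |>.div
      ((continuous_sqrt.tendsto _).comp Stirling.tendsto_stirlingSeq_sqrt_pi) (by positivity)
    rwa [hlim, div_self (by positivity)] at h
  have hprofile : Tendsto (fun k : ℕ ↦ exp (2 * (√((k : ℝ) / 2) ^ 2 *
      (log (1 + y / √((k : ℝ) / 2)) - y / √((k : ℝ) / 2))) - y ^ 2)) atTop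
      (𝓝 (exp (-2 * y ^ 2))) := by
    have h := (((tendsto_sq_mul_log_one_add_div_sub_div y).comp hpeak).const_mul 2).sub_const
      (y ^ 2)
    rw [show 2 * (-y ^ 2 / 2) - y ^ 2 = -2 * y ^ 2 by ring] at h
    exact (continuous_exp.tendsto _).comp h
  refine (one_mul (exp (-2 * y ^ 2)) ▸ hstirling.mul hprofile).congr' ?_
  filter_upwards [eventually_ne_atTop 0, hpeak.eventually_gt_atTop |y|] with k hk hy
  have hs : 0 < √((k : ℝ) / 2) := (abs_nonneg y).trans_lt hy
  rw [rpow_one_div_four_mul_sqrt_two_pow_div_factorial hk, mul_assoc, mul_assoc,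
    exp_half_div_pow_mul_add_pow_mul_exp hs (by linarith [neg_abs_le y])
      (by rw [sq_sqrt (by positivity)]; ring)]
end
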